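/- arXiv:2407.00836 — 6 statements merged into one kernel-verified Lean document; each statement's English description precedes it below -/
import Mathlib

section
/- With the greedy earliest start times y* defined as in the greedy recursion (first trip starts at s_{i_1} - lb, and y*_{i_{p+1}} = max(s_{i_{p+1}} - lb, y*_{i_p} + d_{i_p} + t_{i_p i_{p+1}} - e_{i_p})), define a trip i to be on time if y*_i ≤ s_i + ub, where ub ≥ 0 is the upper tolerance. Then for any feasible assignment (y, u, v) where y are feasible start times, u are expressing amounts with 0 ≤ u_i ≤ e_i, and v_i ∈ {0,1} with v_i = 1 only if y_i ≤ s_i + ub, the number of trips i with v_i = 1 is at most the number of trips with y*_i ≤ s_i + ub. Hence the greedy solution maximizes the number of on-time trips. -/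
/-- The greedy solution maximizes the number of on-time trips: for any feasible
assignment (y, u, v), the number of trips marked on time is at most the number of
trips that are on time under the greedy earliest start times. -/
theorem greedy_maximizes_on_time_trips
    (n : ℕ) (s d t e : ℕ → ℝ) (lb ub : ℝ)
    (hlb : 0 ≤ lb) (hub : 0 ≤ ub)
    (hd : ∀ p, 0 ≤ d p) (ht : ∀ p, 0 ≤ t p) (he : ∀ p, 0 ≤ e p)
    (ystar : ℕ → ℝ)
    (hstar0 : ystar 0 = s 0 - lb)
    (hstarrec : ∀ p, ystar (p + 1) = max (s (p + 1) - lb) (ystar p + d p + t p - e p))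
    (y : ℕ → ℝ)
    (hy0 : y 0 = s 0 - lb)
    (hylb : ∀ p, s p - lb ≤ y p)
    (hyprop : ∀ p, ∃ u : ℝ, 0 ≤ u ∧ u ≤ e p ∧ y p + d p + t p - u ≤ y (p + 1))
    (v : ℕ → ℝ)
    (hv : ∀ p, v p = 0 ∨ v p = 1)
    (hvot : ∀ p, v p = 1 → y p ≤ s p + ub) :
    {p | p < n ∧ v p = 1}.ncard ≤ {p | p < n ∧ ystar p ≤ s p + ub}.ncard := by
  have hle : ∀ p, ystar p ≤ y p := by
    intro p
    induction p with
    | zero => rw [hstar0, hy0]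
    | succ p ih =>
      rw [hstarrec p]
      obtain ⟨u, hu0, hue, hurec⟩ := hyprop p
      refine max_le (hylb _) ?_
      calc ystar p + d p + t p - e p ≤ y p + d p + t p - u := by linarith
        _ ≤ y (p + 1) := hurec
  have hsub : {p | p < n ∧ v p = 1} ⊆ {p | p < n ∧ ystar p ≤ s p + ub} := by
    rintro p ⟨hpn, hpv⟩
    exact ⟨hpn, le_trans (hle p) (hvot p hpv)⟩
  exact Set.ncard_le_ncard hsub
    ((Set.finite_Iio n).subset (fun p hp => hp.1))
end

section
/- Let y* be the greedy earliest start times for an ordered trip sequence as above, and suppose trip i_q is delayed, i.e., y*_{i_q} > s_{i_q} + ub. Then there exists an index p < q such that y*_{i_p} = s_{i_p} - lb and for all indices r with p ≤ r < q the propagation constraint is tight at the greedy solution: y*_{i_{r+1}} = y*_{i_r} + d_{i_r} + t_{i_r i_{r+1}} - e_{i_r}. Consequently, the subsequence (i_p, ..., i_q) 'explains the delay' of i_q: even if i_p starts as early as possible (at s_{i_p} - lb), trip i_q starts strictly later than s_{i_q} + ub. -/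
/-- If trip `q` is delayed under the greedy earliest start times, there is an
earlier index `p` at which the greedy start is at its earliest allowed value and
all propagation constraints between `p` and `q` are tight; consequently the
subsequence from `p` to `q` explains the delay of `q`: starting `p` as early as
possible still makes `q` start strictly later than `s q + ub`. -/
theorem delayed_trip_has_explaining_subsequence
    (s d t e : ℕ → ℝ) (lb ub : ℝ)
    (hlb : 0 ≤ lb) (hub : 0 ≤ ub)
    (hd : ∀ p, 0 ≤ d p) (ht : ∀ p, 0 ≤ t p) (he : ∀ p, 0 ≤ e p)
    (ystar : ℕ → ℝ)
    (hstar0 : ystar 0 = s 0 - lb)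
    (hstarrec : ∀ p, ystar (p + 1) = max (s (p + 1) - lb) (ystar p + d p + t p - e p))
    (q : ℕ) (hq : s q + ub < ystar q) :
    ∃ p, p < q ∧ ystar p = s p - lb ∧
      (∀ r, p ≤ r → r < q → ystar (r + 1) = ystar r + d r + t r - e r) ∧
      s q + ub < s p - lb + ∑ r ∈ Finset.Ico p q, (d r + t r - e r) := by
  have key : ∀ n, ∃ p, p ≤ n ∧ ystar p = s p - lb ∧
      ∀ r, p ≤ r → r < n → ystar (r + 1) = ystar r + d r + t r - e r := by
    intro n
    induction n with
    | zero => exact ⟨0, le_refl 0, hstar0, fun r _ h2 => absurd h2 (Nat.not_lt_zero r)⟩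
    | succ m ih =>
      by_cases h : ystar (m + 1) = s (m + 1) - lb
      · exact ⟨m + 1, le_refl _, h, fun r h1 h2 => absurd (lt_of_le_of_lt h1 h2) (lt_irrefl _)⟩
      · obtain ⟨p, hp, h1, h2⟩ := ih
        have htight : ystar (m + 1) = ystar m + d m + t m - e m := by
          have hrec := hstarrec m
          rcases max_cases (s (m + 1) - lb) (ystar m + d m + t m - e m) with ⟨h3, _⟩ | ⟨h3, _⟩
          · exact absurd (hrec.trans h3) h
          · exact hrec.trans h3
        refine ⟨p, hp.trans (Nat.le_succ m), h1, fun r hr1 hr2 => ?_⟩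
        rcases Nat.lt_or_ge r m with hr | hr
        · exact h2 r hr1 hr
        · have : r = m := Nat.le_antisymm (Nat.lt_succ_iff.mp hr2) hr
          subst this; exact htight
  obtain ⟨p, hple, hp1, hp2⟩ := key q
  have hpq : p < q := by
    rcases Nat.lt_or_ge p q with h | h
    · exact h
    · exfalso
      have : p = q := Nat.le_antisymm hple h
      subst this
      rw [hp1] at hq
      linarith
  have tel : ∀ n, p ≤ n → n ≤ q →
      ystar n = ystar p + ∑ r ∈ Finset.Ico p n, (d r + t r - e r) := by
    intro n
    induction n with
    | zero =>
      intro h1 _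
      have : p = 0 := Nat.le_zero.mp h1
      subst this; simp
    | succ m ih =>
      intro h1 h2
      rcases Nat.lt_or_ge m p with h | h
      · have : p = m + 1 := Nat.le_antisymm h1 h
        subst this; simp
      · have hmq : m < q := lt_of_lt_of_le (Nat.lt_succ_self m) h2
        have hm := ih h (le_of_lt hmq)
        rw [hp2 m h hmq, hm, Finset.sum_Ico_succ_top h]
        ring
  have := tel q hple (le_refl q)
  rw [hp1] at this
  exact ⟨p, hpq, hp1, hp2, by linarith⟩
end

section
/- Under the same setup as the previous statement, suppose V^MIS ⊆ V are two sets of coordinates, each with pairwise distinct successor groups. Then the cut ∑_{a ∈ V^MIS} x_a ≤ |V^MIS| - 1 + z dominates the cut ∑_{a ∈ V} x_a ≤ |V| - 1 + z, in the sense that every (x, z) ∈ {0,1}^n × {0,1} with x satisfying the assignment constraints and satisfying the V^MIS-cut also satisfies the V-cut. -/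
/-- Dominance of MIS cuts over no-good cuts: if `VMIS ⊆ V` and both sets hit
pairwise distinct assignment groups, then any binary `(x, z)` with `x` satisfying
the assignment constraints that satisfies the `VMIS`-cut also satisfies the
`V`-cut. -/
theorem mis_cut_dominates_no_good_cut
    {α J : Type*} [Fintype α] [DecidableEq α]
    (A : J → Finset α)
    (hdisj : ∀ j j', j ≠ j' → Disjoint (A j) (A j'))
    (VMIS V : Finset α) (hsub : VMIS ⊆ V)
    (hV : ∀ a ∈ V, ∃ j, a ∈ A j)
    (hVdistinct : ∀ a ∈ V, ∀ b ∈ V, ∀ j, a ∈ A j → b ∈ A j → a = b) :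
    ∀ x : α → ℝ, (∀ a, x a = 0 ∨ x a = 1) → (∀ j, ∑ a ∈ A j, x a = 1) →
      ∀ z : ℝ, z = 0 ∨ z = 1 →
        (∑ a ∈ VMIS, x a ≤ (VMIS.card : ℝ) - 1 + z) →
        ∑ a ∈ V, x a ≤ (V.card : ℝ) - 1 + z := by
  intro x hx _ z _ hMIS
  have hsplit : ∑ a ∈ V, x a = ∑ a ∈ VMIS, x a + ∑ a ∈ V \ VMIS, x a := by
    rw [← Finset.sum_sdiff hsub]; ring
  have hbound : ∑ a ∈ V \ VMIS, x a ≤ ((V \ VMIS).card : ℝ) := by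
    calc ∑ a ∈ V \ VMIS, x a ≤ ∑ _a ∈ V \ VMIS, (1 : ℝ) :=
          Finset.sum_le_sum (fun a _ => by rcases hx a with h | h <;> simp [h])
      _ = ((V \ VMIS).card : ℝ) := by simp
  have hcard : ((V \ VMIS).card : ℝ) = (V.card : ℝ) - (VMIS.card : ℝ) := by
    rw [Finset.card_sdiff_of_subset hsub]
    have := Finset.card_le_card hsub
    push_cast [Nat.cast_sub this]
    ring
  rw [hsplit]
  linarith
end

section
/- Let V^CMIS and V^Extra be disjoint sets of coordinates in {0,1}^n, where every x satisfying the assignment constraints has at most one coordinate equal to 1 in each group A_j, and suppose that for each coordinate a ∈ V^Extra there is a coordinate a' ∈ V^CMIS in the same group A_j (so a and a' cannot both be 1). Then for any such x, ∑_{a ∈ V^CMIS ∪ V^Extra} x_a ≤ |V^CMIS| + |{j : A_j contains a coordinate of V^Extra but x_a = 0 for the corresponding a' ∈ V^CMIS}| ≤ |V^CMIS| + |V^Extra|; moreover if additionally for every group A_j containing coordinates of both sets at most one of them is 1, then ∑_{a ∈ V^CMIS ∪ V^Extra} x_a ≤ |V^CMIS| whenever the coordinates of V^Extra in each group substitute for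 (rather than add to) those of V^CMIS. In particular, the extended cut ∑_{a ∈ V^CMIS ∪ V^Extra} x_a ≤ |V^CMIS| - 1 + z dominates the cut ∑_{a ∈ V^CMIS} x_a ≤ |V^CMIS| - 1 + z: any (x,z) satisfying the extended cut satisfies the original cut. -/
/-- Extended C-MIS cuts: with disjoint coordinate sets `VCMIS` and `VExtra`, where
each coordinate of `VExtra` shares an assignment group with some coordinate of
`VCMIS` (so they cannot both be 1), binary `x` with at most one 1 per group
satisfies `∑_{VCMIS ∪ VExtra} x ≤ |VCMIS| + |VExtra|` and in fact
`∑_{VCMIS ∪ VExtra} x ≤ |VCMIS|`; in particular the extended cut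
`∑_{VCMIS ∪ VExtra} x ≤ |VCMIS| - 1 + z` dominates the cut
`∑_{VCMIS} x ≤ |VCMIS| - 1 + z` for nonnegative `x`. -/
theorem extended_cmis_cut_dominates
    {α J : Type*} [Fintype α] [DecidableEq α]
    (A : J → Finset α)
    (hdisj : ∀ j j', j ≠ j' → Disjoint (A j) (A j'))
    (VCMIS VExtra : Finset α) (hVdisj : Disjoint VCMIS VExtra)
    (hmem : ∀ a ∈ VCMIS ∪ VExtra, ∃ j, a ∈ A j)
    (hCMISdistinct : ∀ a ∈ VCMIS, ∀ b ∈ VCMIS, ∀ j, a ∈ A j → b ∈ A j → a = b)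
    (hsubst : ∀ a ∈ VExtra, ∃ a' ∈ VCMIS, ∃ j, a ∈ A j ∧ a' ∈ A j) :
    ∀ x : α → ℝ, (∀ a, x a = 0 ∨ x a = 1) → (∀ j, ∑ a ∈ A j, x a ≤ 1) →
      (∑ a ∈ VCMIS ∪ VExtra, x a ≤ (VCMIS.card : ℝ) + (VExtra.card : ℝ)) ∧
      (∑ a ∈ VCMIS ∪ VExtra, x a ≤ (VCMIS.card : ℝ)) ∧
      (∀ z : ℝ,
        (∑ a ∈ VCMIS ∪ VExtra, x a ≤ (VCMIS.card : ℝ) - 1 + z) →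
        ∑ a ∈ VCMIS, x a ≤ (VCMIS.card : ℝ) - 1 + z) := by
  classical
  intro x hx01 hgrp
  have hxnn : ∀ a, 0 ≤ x a := by
    intro a; rcases hx01 a with h | h <;> simp [h]
  -- choose a group for each element of VCMIS
  choose g hg using fun (p : {a // a ∈ VCMIS}) =>
    hmem p.1 (Finset.mem_union_left _ p.2)
  have key : ∑ a ∈ VCMIS ∪ VExtra, x a ≤ (VCMIS.card : ℝ) := by
    have hsubset : VCMIS ∪ VExtra ⊆ VCMIS.attach.biUnion (fun p => A (g p)) := by
      intro a ha
      rcases Finset.mem_union.mp ha with ha | ha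
      · exact Finset.mem_biUnion.mpr ⟨⟨a, ha⟩, Finset.mem_attach _ _, hg _⟩
      · obtain ⟨a', ha', j, haj, ha'j⟩ := hsubst a ha
        have hjg : j = g ⟨a', ha'⟩ := by
          by_contra hne
          exact (hdisj j _ hne).forall_ne_finset ha'j (hg ⟨a', ha'⟩) rfl
        exact Finset.mem_biUnion.mpr ⟨⟨a', ha'⟩, Finset.mem_attach _ _, hjg ▸ haj⟩
    have hpw : ∀ p ∈ VCMIS.attach, ∀ q ∈ VCMIS.attach, p ≠ q →
        Disjoint (A (g p)) (A (g q)) := by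
      intro p _ q _ hpq
      by_cases hgij : g p = g q
      · exfalso
        apply hpq
        exact Subtype.ext (hCMISdistinct p.1 p.2 q.1 q.2 (g p) (hg p) (hgij ▸ hg q))
      · exact hdisj _ _ hgij
    calc ∑ a ∈ VCMIS ∪ VExtra, x a
        ≤ ∑ a ∈ VCMIS.attach.biUnion (fun p => A (g p)), x a :=
          Finset.sum_le_sum_of_subset_of_nonneg hsubset (fun a _ _ => hxnn a)
      _ = ∑ p ∈ VCMIS.attach, ∑ a ∈ A (g p), x a := Finset.sum_biUnion hpw
      _ ≤ ∑ p ∈ VCMIS.attach, (1 : ℝ) := Finset.sum_le_sum (fun p _ => hgrp (g p))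
      _ = (VCMIS.card : ℝ) := by simp
  refine ⟨le_trans key (le_add_of_nonneg_right (by positivity)), key, ?_⟩
  intro z hz
  calc ∑ a ∈ VCMIS, x a
      ≤ ∑ a ∈ VCMIS ∪ VExtra, x a :=
        Finset.sum_le_sum_of_subset_of_nonneg Finset.subset_union_left
          (fun a _ _ => hxnn a)
    _ ≤ (VCMIS.card : ℝ) - 1 + z := hz
end

section
/- Let C^s = {(i,j) : s_i - lb + d^s_i + t^s_{ij} - e_i ≤ s_j + ub} be the operational compatibility set for scenario s, and suppose a bus sequence (i_1, ..., i_n) satisfies: every consecutive pair (i_r, i_{r+1}) belongs to C^s, and additionally s_{i_r} + ub + d^s_{i_r} + t^s_{i_r i_{r+1}} - e_{i_r} ≤ s_{i_{r+1}} + ub for all r (i.e., even a maximally-late-but-on-time start of i_r allows i_{r+1} to start by s_{i_{r+1}} + ub). Then under the greedy earliest start times every trip of the sequence is on time: s_{i_r} - lb ≤ y*_{i_r} ≤ s_{i_r} + ub for all r. -/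
/-- A sufficient sequence-level condition for full on-time performance: if every
consecutive pair of the bus sequence is operationally compatible in scenario `s`
and moreover even a maximally-late-but-on-time start of each trip lets its
successor start by its latest on-time instant, then every trip of the sequence
is on time under the greedy earliest start times. -/
theorem strengthened_compatibility_implies_all_on_time
    (s d t e : ℕ → ℝ) (lb ub : ℝ)
    (hlb : 0 ≤ lb) (hub : 0 ≤ ub)
    (ystar : ℕ → ℝ)
    (hstar0 : ystar 0 = s 0 - lb)
    (hstarrec : ∀ r, ystar (r + 1) = max (s (r + 1) - lb) (ystar r + d r + t r - e r))
    (hcompat : ∀ r, s r - lb + d r + t r - e r ≤ s (r + 1) + ub)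
    (hstrong : ∀ r, s r + ub + d r + t r - e r ≤ s (r + 1) + ub) :
    ∀ r, s r - lb ≤ ystar r ∧ ystar r ≤ s r + ub := by
  intro r
  induction r with
  | zero =>
    constructor
    · rw [hstar0]
    · rw [hstar0]; linarith
  | succ n ih =>
    rw [hstarrec n]
    constructor
    · exact le_max_left _ _
    · apply max_le
      · linarith
      · have := hstrong n
        linarith [ih.2]
end

section
/- Consider the LP with variables z, v_i, y_i ≥ 0 and constraints: ∑_i v_i + f·z ≥ f; z + ∑_{i ∈ D} v_i ≥ 1; y_i ≥ s_i - lb for all i; propagation constraints y_i - y_j ≥ d_j + t_{ji} - e_j for scheduled pairs (j,i); and v_i(ub - y*_i + s_i) - y_i ≥ -y*_i for all i, where y* are fixed constants with y*_i ≥ s_i - lb and y*_i > s_i + ub for all i ∈ D. Assume y* satisfies all the y-constraints with equality on the scheduled pairs of a 'C-MIS subsequence' and D is nonempty. Then in every optimal solution of the LP (minimizing z): (a) for every i ∈ D, v_i = 0 — because the constraint v_i(ub - y*_i + s_i) ≥ y_i - y*_i together with y_i ≥ (the propagated lower bound) ≥ y*_i and ub - y*_i + s_i < 0 forces v_i ≤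 0; and (b) hence z ≥ 1, i.e., the LP optimal value is at least 1 (and equals 1). -/
/-- The strengthened LP relaxation of the scenario subproblem has optimal value 1:
with tightened big-M coefficients (`M^OTP_i = y*_i - s_i`), the extra C-MIS
inequality `z + ∑_{i ∈ D} v_i ≥ 1`, propagation forcing `y_i ≥ y*_i` on the
delayed set `D`, and `y*_i > s_i + ub` on `D`, every feasible LP point has
`v_i = 0` for all `i ∈ D` and hence `z ≥ 1`; moreover a feasible point with
`z = 1` exists, so the LP optimum equals 1. -/
theorem strengthened_lp_forces_z_one
    {α : Type*} [Fintype α]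
    (s ystar : α → ℝ) (lb ub : ℝ) (D : Finset α) (hD : D.Nonempty)
    (Pairs : Finset (α × α)) (dd : α × α → ℝ) (f : ℝ) (hf : 0 ≤ f)
    (hystar_lb : ∀ i, s i - lb ≤ ystar i)
    (hystar_nonneg : ∀ i, 0 ≤ ystar i)
    (htight : ∀ p ∈ Pairs, ystar p.2 - ystar p.1 = dd p)
    (hdelay : ∀ i ∈ D, s i + ub < ystar i)
    (hforce : ∀ y : α → ℝ, (∀ i, s i - lb ≤ y i) →
      (∀ p ∈ Pairs, dd p ≤ y p.2 - y p.1) → ∀ i ∈ D, ystar i ≤ y i) :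
    (∀ (z : ℝ) (v y : α → ℝ),
      0 ≤ z → (∀ i, 0 ≤ v i) → (∀ i, 0 ≤ y i) →
      f ≤ ∑ i, v i + f * z →
      1 ≤ z + ∑ i ∈ D, v i →
      (∀ i, s i - lb ≤ y i) →
      (∀ p ∈ Pairs, dd p ≤ y p.2 - y p.1) →
      (∀ i, -(ystar i) ≤ v i * (ub - ystar i + s i) - y i) →
      (∀ i ∈ D, v i = 0) ∧ 1 ≤ z) ∧
    (∃ (z : ℝ) (v y : α → ℝ),
      0 ≤ z ∧ (∀ i, 0 ≤ v i) ∧ (∀ i, 0 ≤ y i) ∧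
      f ≤ ∑ i, v i + f * z ∧
      1 ≤ z + ∑ i ∈ D, v i ∧
      (∀ i, s i - lb ≤ y i) ∧
      (∀ p ∈ Pairs, dd p ≤ y p.2 - y p.1) ∧
      (∀ i, -(ystar i) ≤ v i * (ub - ystar i + s i) - y i) ∧
      z = 1) := by
  constructor
  · intro z v y hz hv hy _ hcut hylb hprop hbig
    have hv0 : ∀ i ∈ D, v i = 0 := by
      intro i hi
      have hyi : ystar i ≤ y i := hforce y hylb hprop i hi
      have hneg : ub - ystar i + s i < 0 := by
        have := hdelay i hi; linarith
      have h1 : 0 ≤ v i * (ub - ystar i + s i) := by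
        have := hbig i; linarith
      nlinarith [hv i]
    refine ⟨hv0, ?_⟩
    have : ∑ i ∈ D, v i = 0 := Finset.sum_eq_zero hv0
    linarith
  · refine ⟨1, 0, ystar, by norm_num, by intro i; simp, hystar_nonneg, by simp, by simp, hystar_lb, ?_, ?_, rfl⟩
    · intro p hp; rw [← htight p hp]
    · intro i; simp
end
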